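/- arXiv:2305.11640 — 3 statements merged into one kernel-verified Lean document; each statement's English description precedes it below -/
import Mathlib

section
/- Let R_1, ..., R_{n+1} be exchangeable real-valued random variables. Then the probability that R_{n+1} is at most the ceiling((1-α)(n+1))-th smallest value among R_1, ..., R_{n+1} is at least 1-α. -/
/-! Put `k = ⌈(1 - α)(n + 1)⌉` and let `S i` be the event that `R i` is at most the `k`-th
smallest of all the values. At every outcome at least `k` of the events `S i` occur, so
`∑ i, P (S i) ≥ k`. The `k`-th smallest value does not change when the coordinates are
permuted, so exchangeability makes all `P (S i)` equal, whence
`(n + 1) P (S last) ≥ k ≥ (1 - α)(n + 1)`. -/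

open MeasureTheory ProbabilityTheory Finset
open scoped ENNReal

/-- The `k`-th smallest value (1-indexed, clamped to valid range) of `x`. -/
noncomputable def orderStat {n : ℕ} [NeZero n] (k : ℕ) (x : Fin n → ℝ) : ℝ :=
  x (Tuple.sort x ⟨min (k - 1) (n - 1), by
    have h := Nat.pos_of_ne_zero (NeZero.ne n); omega⟩)

/-- The lower `β`-quantile of the empirical distribution `(1/n) ∑ δ_{x j}`,
i.e. the `⌈β n⌉`-th smallest of the `x j`. -/
noncomputable def empQuantile {n : ℕ} [NeZero n] (β : ℝ) (x : Fin n → ℝ) : ℝ :=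
  orderStat ⌈β * n⌉₊ x

section OrderStat

variable {n : ℕ} [NeZero n]

theorem orderStat_comp_perm (k : ℕ) (x : Fin n → ℝ) (π : Equiv.Perm (Fin n)) :
    orderStat k (x ∘ π) = orderStat k x :=
  congrFun (Tuple.comp_perm_comp_sort_eq_comp_sort (σ := π) (f := x)) _

theorem orderStat_le_iff (k : ℕ) (x : Fin n → ℝ) (a : ℝ) :
    orderStat k x ≤ a ↔ min (k - 1) (n - 1) + 1 ≤ #{i | x i ≤ a} := by
  have hn : 0 < n := Nat.pos_of_ne_zero (NeZero.ne n)
  set σ := Tuple.sort x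
  have hsorted : Monotone (x ∘ σ) := Tuple.monotone_sort x
  have hcard : #{i | (x ∘ σ) i ≤ a} = #{i | x i ≤ a} := by
    simp only [← Fintype.card_subtype]
    exact Fintype.card_congr (σ.subtypeEquiv fun _ => Iff.rfl)
  have := Tuple.lt_card_le_iff_apply_le_of_monotone (a := a) hsorted
    (j := ⟨min (k - 1) (n - 1), by omega⟩)
  rw [hcard] at this
  change (x ∘ σ) _ ≤ a ↔ _
  rw [← this]
  exact Nat.lt_iff_add_one_le

theorem le_card_le_orderStat {k : ℕ} (hkn : k ≤ n) (x : Fin n → ℝ) :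
    k ≤ #{i | x i ≤ orderStat k x} := by
  have := (orderStat_le_iff k x (orderStat k x)).1 le_rfl
  omega

theorem measurable_orderStat (k : ℕ) : Measurable (orderStat (n := n) k) := by
  refine measurable_of_Iic fun a => ?_
  have hpre : orderStat (n := n) k ⁻¹' Set.Iic a =
      ⋃ s ∈ univ.powersetCard (min (k - 1) (n - 1) + 1), ⋂ i ∈ s, {x | x i ≤ a} := by
    ext x
    simp only [Set.mem_preimage, Set.mem_Iic, orderStat_le_iff, Set.mem_iUnion,
      Set.mem_iInter, Set.mem_ofPred_eq, mem_powersetCard, subset_univ, true_and]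
    constructor
    · intro h
      obtain ⟨t, hts, htc⟩ := exists_subset_card_eq h
      exact ⟨t, htc, fun i hi => (mem_filter.1 (hts hi)).2⟩
    · rintro ⟨s, hcard, hs⟩
      exact hcard ▸ card_le_card fun i hi => mem_filter.2 ⟨mem_univ i, hs i hi⟩
  rw [hpre]
  exact .biUnion (countable_toSet _) fun s _ => .biInter (countable_toSet _) fun i _ =>
    measurableSet_le (measurable_pi_apply i) measurable_const

end OrderStat

theorem natCast_mul_measure_univ_le_sum_measure {α ι : Type*} [MeasurableSpace α]
    (μ : Measure α) (s : Finset ι) {A : ι → Set α} [∀ x, DecidablePred (x ∈ A ·)]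
    (hA : ∀ i ∈ s, MeasurableSet (A i))
    {k : ℕ} (hk : ∀ x, k ≤ #{i ∈ s | x ∈ A i}) :
    k * μ Set.univ ≤ ∑ i ∈ s, μ (A i) := by
  calc k * μ Set.univ = ∫⁻ _, (k : ℝ≥0∞) ∂μ := by simp
    _ ≤ ∫⁻ x, ∑ i ∈ s, (A i).indicator 1 x ∂μ := by
        refine lintegral_mono fun x => ?_
        simp only [Set.indicator_apply, Pi.one_apply, sum_boole]
        exact_mod_cast hk x
    _ = ∑ i ∈ s, μ (A i) := by
        rw [lintegral_finsetSum' _ fun i hi =>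
          (measurable_one.indicator (hA i hi)).aemeasurable]
        exact sum_congr rfl fun i hi => lintegral_indicator_one (hA i hi)

def Exchangeable {ι β : Type*} [MeasurableSpace β] (μ : Measure (ι → β)) : Prop :=
  ∀ π : Equiv.Perm ι, μ.map (fun x => x ∘ π) = μ

theorem measurable_comp_perm {ι β : Type*} [MeasurableSpace β] (π : Equiv.Perm ι) :
    Measurable fun x : ι → β => x ∘ π :=
  measurable_pi_lambda _ fun i => measurable_pi_apply (π i)

namespace Exchangeable

variable {ι : Type*} {μ : Measure (ι → ℝ)}

theorem measure_apply_le_eq [DecidableEq ι] (hμ : Exchangeable μ) {g : (ι → ℝ) → ℝ}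
    (hg : Measurable g) (hg_perm : ∀ x (π : Equiv.Perm ι), g (x ∘ π) = g x) (i j : ι) :
    μ {x | x i ≤ g x} = μ {x | x j ≤ g x} := by
  have hset : (fun x => x ∘ Equiv.swap j i) ⁻¹' {x | x j ≤ g x} = {x | x i ≤ g x} := by
    ext x
    simp [hg_perm]
  rw [← hset, ← Measure.map_apply (measurable_comp_perm _)
    (measurableSet_le (measurable_pi_apply j) hg), hμ]

theorem le_mul_measure_le_orderStat {m : ℕ} [NeZero m] {μ : Measure (Fin m → ℝ)}
    [IsProbabilityMeasure μ] (hμ : Exchangeable μ) {k : ℕ} (hkm : k ≤ m) (i : Fin m) :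
    (k : ℝ≥0∞) ≤ m * μ {x | x i ≤ orderStat k x} := by
  have hS : ∀ j, MeasurableSet {x : Fin m → ℝ | x j ≤ orderStat k x} := fun j =>
    measurableSet_le (measurable_pi_apply j) (measurable_orderStat k)
  calc (k : ℝ≥0∞) = k * μ Set.univ := by simp
    _ ≤ ∑ j, μ {x | x j ≤ orderStat k x} :=
        natCast_mul_measure_univ_le_sum_measure μ univ (fun j _ => hS j) fun x => by
          simpa only [Set.mem_ofPred_eq] using le_card_le_orderStat hkm x
    _ = m * μ {x | x i ≤ orderStat k x} := by
        rw [sum_congr rfl fun j _ => hμ.measure_apply_le_eq (measurable_orderStat k)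
          (orderStat_comp_perm k) j i]
        simp

end Exchangeable

/-- quantile lemma for exchangeable variables: if `R 0, …, R n` are
exchangeable, then `R n` is at most the `⌈(1-α)(n+1)⌉`-th smallest of all `n+1`
values with probability at least `1 - α`. -/
theorem exchangeable_quantile_lower_bound
    {Ω : Type*} [MeasurableSpace Ω] (P : Measure Ω) [IsProbabilityMeasure P]
    (n : ℕ) (R : Fin (n + 1) → Ω → ℝ) (hmeas : ∀ i, Measurable (R i))
    (hexch : ∀ π : Equiv.Perm (Fin (n + 1)),
      P.map (fun ω => fun i => R (π i) ω) = P.map (fun ω => fun i => R i ω))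
    (α : ℝ) (hα : α ∈ Set.Ioo (0 : ℝ) 1) :
    ENNReal.ofReal (1 - α) ≤
      P {ω | R (Fin.last n) ω ≤
        orderStat ⌈(1 - α) * (n + 1)⌉₊ (fun i => R i ω)} := by
  set k := ⌈(1 - α) * (n + 1)⌉₊
  set T : Ω → Fin (n + 1) → ℝ := fun ω i => R i ω
  have hT : Measurable T := measurable_pi_lambda _ hmeas
  have hlaw : Exchangeable (P.map T) := fun π => by
    rw [Measure.map_map (measurable_comp_perm π) hT]
    exact hexch π
  have : IsProbabilityMeasure (P.map T) := Measure.isProbabilityMeasure_map hT.aemeasurable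
  have hkn : k ≤ n + 1 := Nat.ceil_le.2 (by push_cast; nlinarith [hα.1])
  have key := hlaw.le_mul_measure_le_orderStat hkn (Fin.last n)
  rw [Measure.map_apply hT (measurableSet_le (measurable_pi_apply _) (measurable_orderStat k))]
    at key
  calc ENNReal.ofReal (1 - α) = ENNReal.ofReal (1 - α) * (n + 1 : ℕ) / (n + 1 : ℕ) :=
        (ENNReal.mul_div_cancel_right (by simp) (by simp)).symm
    _ ≤ k / (n + 1 : ℕ) := by
        gcongr
        rw [← ENNReal.ofReal_natCast, ← ENNReal.ofReal_mul' (by positivity),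
          ← ENNReal.ofReal_natCast]
        exact ENNReal.ofReal_le_ofReal (by push_cast; exact Nat.le_ceil _)
    _ ≤ _ := ENNReal.div_le_of_le_mul' key
end

section
/- Let R_1, ..., R_{n+1} be exchangeable real-valued random variables that are almost surely pairwise distinct. Then P(R_{n+1} ≤ ⌈(1-α)(n+1)⌉-th order statistic of R_1,...,R_{n+1}) ≤ 1 - α + 1/(n+1). -/
/-!
Without ties, the event `R_{n+1} ≤ R_{(k)}` says that fewer than `k` of the `R_i` lie strictly
below `R_{n+1}`. For each outcome at most `k` indices `i` have this property, so the `n + 1`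
probabilities `P(fewer than k of the R_j lie below R_i)` add up to at most `k`; by exchangeability
they are all equal, hence each is at most `k / (n + 1) ≤ 1 - α + 1 / (n + 1)` for
`k = ⌈(1 - α)(n + 1)⌉`.
-/

open MeasureTheory ProbabilityTheory Finset

open scoped ENNReal

section Rank

variable {α : Type*} [LinearOrder α] {n : ℕ}

/-- A `0`-indexed rank. Counting strictly smaller entries makes `x i ≤ orderStat k x` equivalent
to `rank x i < k` even in the presence of ties. -/
def rank (x : Fin n → α) (i : Fin n) : ℕ := #{j | x j < x i}

theorem rank_comp_perm (x : Fin n → α) (π : Equiv.Perm (Fin n)) (i : Fin n) :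
    rank (x ∘ π) i = rank x (π i) :=
  card_equiv π fun j => by simp

theorem rank_lt (x : Fin n → α) (i : Fin n) : rank x i < n := by
  simpa [rank] using card_lt_card (filter_ssubset.mpr ⟨i, mem_univ i, lt_irrefl (x i)⟩)

theorem rank_lt_rank {x : Fin n → α} {i j : Fin n} (h : x i < x j) : rank x i < rank x j :=
  card_lt_card <| (ssubset_iff_of_subset fun l => by simpa using fun hl => hl.trans h).mpr
    ⟨i, by simpa using h, by simp⟩

theorem rank_injective {x : Fin n → α} (hx : Function.Injective x) :
    Function.Injective (rank x) := by
  intro i j hij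
  rcases lt_trichotomy (x i) (x j) with h | h | h
  · exact absurd hij (rank_lt_rank h).ne
  · exact hx h
  · exact absurd hij (rank_lt_rank h).ne'

theorem card_rank_lt_le {x : Fin n → α} (hx : Function.Injective x) (k : ℕ) :
    #{i | rank x i < k} ≤ k := by
  simpa using card_le_card_of_injOn (t := range k) (rank x) (fun i hi => by simpa using hi)
    (rank_injective hx).injOn

end Rank

theorem le_orderStat_iff_rank_lt {n k : ℕ} [NeZero n] (hk : 1 ≤ k) (x : Fin n → ℝ) (i : Fin n) :
    x i ≤ orderStat k x ↔ rank x i < k := by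
  have hrank : #{j | (x ∘ Tuple.sort x) j < x i} = rank x i :=
    card_equiv (Tuple.sort x) fun j => by simp
  have hsorted := Tuple.lt_card_lt_iff_apply_lt_of_monotone (Tuple.monotone_sort x)
    (j := ⟨min (k - 1) (n - 1), by have := NeZero.pos n; omega⟩) (a := x i)
  rw [hrank, Function.comp_apply] at hsorted
  rw [orderStat, ← not_lt, ← hsorted, Fin.val_mk]
  have := rank_lt x i
  omega

section Measure

variable {Ω ι : Type*} [MeasurableSpace Ω]

open scoped Classical in
theorem sum_measure_le_of_ae_card_le [Fintype ι] (P : Measure Ω) {A : ι → Set Ω}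
    (hA : ∀ i, MeasurableSet (A i)) {k : ℕ} (hk : ∀ᵐ ω ∂P, #{i | ω ∈ A i} ≤ k) :
    ∑ i, P (A i) ≤ k * P Set.univ := by
  calc ∑ i, P (A i) = ∫⁻ ω, ∑ i, (A i).indicator 1 ω ∂P := by
        rw [lintegral_finsetSum _ fun i _ => measurable_one.indicator (hA i)]
        simp only [lintegral_indicator_one (hA _)]
    _ ≤ ∫⁻ _, (k : ℝ≥0∞) ∂P := by
        refine lintegral_mono_ae (hk.mono fun ω hω => ?_)
        simp only [Set.indicator_apply, Pi.one_apply, sum_boole]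
        exact_mod_cast hω
    _ = k * P Set.univ := lintegral_const _

variable {α : Type*} [MeasurableSpace α] [TopologicalSpace α] [LinearOrder α]
  [OrderClosedTopology α] [OpensMeasurableSpace α] [SecondCountableTopology α] {n : ℕ}

theorem measurable_rank (i : Fin n) : Measurable fun x : Fin n → α => rank x i := by
  simp only [rank, card_filter]
  exact Finset.measurable_sum _ fun j _ => Measurable.ite
    (measurableSet_lt (measurable_pi_apply j) (measurable_pi_apply i)) measurable_const
    measurable_const

theorem measure_rank_lt_comp_perm (P : Measure Ω) {X : Ω → Fin n → α} (hX : Measurable X)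
    (π : Equiv.Perm (Fin n)) (hπ : P.map (fun ω i => X ω (π i)) = P.map X) (i : Fin n) (k : ℕ) :
    P {ω | rank (X ω) (π i) < k} = P {ω | rank (X ω) i < k} := by
  have hS : MeasurableSet {x : Fin n → α | rank x i < k} :=
    measurableSet_lt (measurable_rank i) measurable_const
  have hXπ : Measurable fun ω i => X ω (π i) := measurable_pi_lambda _ fun j => hX.eval
  have hevent : {ω | rank (X ω) (π i) < k} = (fun ω i => X ω (π i)) ⁻¹' {x | rank x i < k} := by
    ext ω
    exact iff_of_eq (congrArg (· < k) (rank_comp_perm (X ω) π i).symm)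
  rw [hevent, ← Measure.map_apply hXπ hS, hπ, Measure.map_apply hX hS]
  rfl

theorem card_mul_measure_rank_lt_le (P : Measure Ω) [IsProbabilityMeasure P]
    {X : Ω → Fin n → α} (hX : Measurable X)
    (hexch : ∀ π : Equiv.Perm (Fin n), P.map (fun ω i => X ω (π i)) = P.map X)
    (hinj : ∀ᵐ ω ∂P, Function.Injective (X ω)) (j : Fin n) (k : ℕ) :
    n * P {ω | rank (X ω) j < k} ≤ k := by
  have hsum := sum_measure_le_of_ae_card_le P (A := fun i => {ω | rank (X ω) i < k})
    (fun i => measurableSet_lt ((measurable_rank i).comp hX) measurable_const)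
    (hinj.mono fun ω hω => by simpa using card_rank_lt_le hω k)
  simp only [measure_univ, mul_one] at hsum
  have hequal : ∀ i, P {ω | rank (X ω) i < k} = P {ω | rank (X ω) j < k} := fun i => by
    simpa using measure_rank_lt_comp_perm P hX (Equiv.swap i j) (hexch _) j k
  simpa [hequal] using hsum

end Measure

theorem natCeil_mul_div_le {β m : ℝ} (hβ : 0 ≤ β) (hm : 0 < m) :
    (⌈β * m⌉₊ : ℝ) / m ≤ β + 1 / m := by
  rw [div_le_iff₀ hm, add_mul, one_div_mul_cancel hm.ne']
  exact (Nat.ceil_lt_add_one (mul_nonneg hβ hm.le)).le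

/-- anti over-coverage upper bound for exchangeable, a.s. pairwise
distinct variables. -/
theorem exchangeable_quantile_upper_bound
    {Ω : Type*} [MeasurableSpace Ω] (P : Measure Ω) [IsProbabilityMeasure P]
    (n : ℕ) (R : Fin (n + 1) → Ω → ℝ) (hmeas : ∀ i, Measurable (R i))
    (hexch : ∀ π : Equiv.Perm (Fin (n + 1)),
      P.map (fun ω => fun i => R (π i) ω) = P.map (fun ω => fun i => R i ω))
    (hdistinct : ∀ᵐ ω ∂P, Function.Injective (fun i => R i ω))
    (α : ℝ) (hα : α ∈ Set.Ioo (0 : ℝ) 1) :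
    P {ω | R (Fin.last n) ω ≤
        orderStat ⌈(1 - α) * (n + 1)⌉₊ (fun i => R i ω)} ≤
      ENNReal.ofReal (1 - α + 1 / (n + 1)) := by
  set k := ⌈(1 - α) * (n + 1)⌉₊
  have h1α : 0 < 1 - α := sub_pos.mpr hα.2
  have hn : (0 : ℝ) < n + 1 := by positivity
  have hevent : {ω | R (Fin.last n) ω ≤ orderStat k (fun i => R i ω)} =
      {ω | rank (fun i => R i ω) (Fin.last n) < k} :=
    Set.ext fun ω => le_orderStat_iff_rank_lt (Nat.one_le_ceil_iff.mpr (mul_pos h1α hn))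
      (fun i => R i ω) (Fin.last n)
  have hbound := ENNReal.toReal_mono (ENNReal.natCast_ne_top k) <|
    card_mul_measure_rank_lt_le P (measurable_pi_lambda _ hmeas) hexch hdistinct (Fin.last n) k
  rw [ENNReal.toReal_mul, ENNReal.toReal_natCast, ENNReal.toReal_natCast, Nat.cast_succ]
    at hbound
  rw [hevent, ENNReal.le_ofReal_iff_toReal_le (measure_ne_top _ _) (by positivity)]
  refine le_trans ?_ (natCeil_mul_div_le h1α.le hn)
  rwa [le_div_iff₀ hn, mul_comm]
end

section
/- Inspection paradox counterexample: let Y_1,...,Y_{n+1} be i.i.d. continuous real random variables (n ≥ 1) and let i_0 = argmax_i Y_i. Then the sequence obtained by swapping elements i_0 and 1 of (Y_1,...,Y_{n+1}) does not have the same joint distribution as (Y_1,...,Y_{n+1}); in particular, in the swapped sequence the first coordinate is almost surely the maximum, which occurs with probability 1/(n+1) for the original sequence. -/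
/-!
By exchangeability of an i.i.d. sequence, each coordinate is the maximum with the same
probability; since the law has no atoms, ties are null, so the events "coordinate `i` is the
maximum" almost partition the sample space and each has probability `1/(n+1)`. Moving the argmax
to the front makes the first coordinate the maximum surely, so the two laws differ on that event.
-/

open MeasureTheory ProbabilityTheory Function
open scoped ENNReal

/-- An index achieving the maximum of `x`. -/
noncomputable def argmaxIdx {m : ℕ} (x : Fin (m + 1) → ℝ) : Fin (m + 1) :=
  Classical.choose (Finite.exists_max x)

theorem MeasureTheory.Measure.map_ne_of_forall_mem {Ω β : Type*} [MeasurableSpace Ω]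
    [MeasurableSpace β] {P : Measure Ω} [IsProbabilityMeasure P] {ν : Measure β}
    [IsProbabilityMeasure ν] {g : Ω → β} {s : Set β} (hs : MeasurableSet s)
    (hg : ∀ ω, g ω ∈ s) (hνs : ν s ≠ 1) : P.map g ≠ ν := by
  intro h
  by_cases hgm : AEMeasurable g P
  · refine hνs ?_
    rw [← h, Measure.map_apply_of_aemeasurable hgm hs, Set.preimage_eq_univ_iff.2
      (fun _ ⟨ω, hω⟩ => hω ▸ hg ω), measure_univ]
  · -- `Measure.map` of a non-AE-measurable function is `0`, which is not a probability measure.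
    rw [Measure.map_of_not_aemeasurable hgm] at h
    exact IsProbabilityMeasure.ne_zero ν h.symm

theorem MeasureTheory.Measure.prod_diagonal_eq_zero {α : Type*} [MeasurableSpace α]
    [MeasurableEq α] (μ ν : Measure α) [SFinite ν] [NullSingletonClass ν] :
    μ.prod ν (Set.diagonal α) = 0 := by
  rw [Measure.prod_apply measurableSet_diagonal]
  simp [Set.preimage]

theorem ProbabilityTheory.IndepFun.measure_setOf_eq_eq_zero {Ω α : Type*} [MeasurableSpace Ω]
    [MeasurableSpace α] [MeasurableEq α] {P : Measure Ω} [IsFiniteMeasure P] {X Y : Ω → α}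
    (h : IndepFun X Y P) (hX : Measurable X) (hY : Measurable Y)
    [NullSingletonClass (P.map Y)] : P {ω | X ω = Y ω} = 0 := by
  have hlaw := (indepFun_iff_map_prod_eq_prod_map_map hX.aemeasurable hY.aemeasurable).1 h
  have := Measure.prod_diagonal_eq_zero (P.map X) (P.map Y)
  rwa [← hlaw, Measure.map_apply (hX.prodMk hY) measurableSet_diagonal] at this

theorem MeasureTheory.measurePreserving_comp_perm {ι β : Type*} [Fintype ι]
    [MeasurableSpace β]     (μ : Measure β) [SigmaFinite μ] (σ : Equiv.Perm ι) :
    MeasurePreserving (fun x : ι → β => x ∘ σ) (Measure.pi fun _ => μ)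
      (Measure.pi fun _ => μ) := by
  convert measurePreserving_piCongrLeft (fun _ : ι => μ) σ.symm with x
  ext k
  simpa using
    (MeasurableEquiv.piCongrLeft_apply_apply (β := fun _ : ι => β) σ.symm x (σ k)).symm

section argmaxSet

variable {ι α : Type*} [LinearOrder α]

def argmaxSet (i : ι) : Set (ι → α) := {x | ∀ j, x j ≤ x i}

theorem argmaxSet_inter_subset {i j : ι} :
    argmaxSet i ∩ argmaxSet j ⊆ {x : ι → α | x i = x j} :=
  fun _ hx => le_antisymm (hx.2 i) (hx.1 j)

theorem iUnion_argmaxSet [Finite ι] [Nonempty ι] :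
    ⋃ i, argmaxSet (α := α) (ι := ι) i = Set.univ :=
  Set.eq_univ_of_forall fun x => Set.mem_iUnion.2 (Finite.exists_max x)

theorem preimage_comp_swap_argmaxSet [DecidableEq ι] (i j : ι) :
    (fun x : ι → α => x ∘ Equiv.swap i j) ⁻¹' argmaxSet i = argmaxSet j := by
  ext x
  simp only [argmaxSet, Set.mem_preimage, Set.mem_ofPred_eq, Function.comp_apply,
    Equiv.swap_apply_left]
  exact (Equiv.swap i j).forall_congr_right (q := fun k => x k ≤ x j)

variable [TopologicalSpace α] [OrderClosedTopology α] [SecondCountableTopology α]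
  [MeasurableSpace α] [OpensMeasurableSpace α]

theorem measurableSet_argmaxSet [Countable ι] (i : ι) :
    MeasurableSet (argmaxSet (α := α) i) := by
  simp only [argmaxSet, Set.ofPred_forall]
  exact .iInter fun j => measurableSet_le (measurable_pi_apply j) (measurable_pi_apply i)

variable [Fintype ι] (μ : Measure α)

theorem pi_argmaxSet_eq_pi_argmaxSet [SigmaFinite μ] [DecidableEq ι] (i j : ι) :
    Measure.pi (fun _ : ι => μ) (argmaxSet i) = Measure.pi (fun _ : ι => μ) (argmaxSet j) := by
  rw [← preimage_comp_swap_argmaxSet i j,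
    (measurePreserving_comp_perm μ (Equiv.swap i j)).measure_preimage
      (measurableSet_argmaxSet i).nullMeasurableSet]

theorem pairwise_aedisjoint_pi_argmaxSet [IsProbabilityMeasure μ] [NullSingletonClass μ] :
    Pairwise (AEDisjoint (Measure.pi fun _ : ι => μ) on argmaxSet) := by
  intro i j hij
  have hcoord : iIndepFun (fun i (x : ι → α) => x i) (Measure.pi fun _ => μ) :=
    iIndepFun_pi (X := fun _ => id) fun _ => aemeasurable_id
  have : NullSingletonClass ((Measure.pi fun _ : ι => μ).map fun x => x j) := by
    rw [(measurePreserving_eval _ j).map_eq]; infer_instance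
  exact measure_mono_null argmaxSet_inter_subset
    ((hcoord.indepFun hij).measure_setOf_eq_eq_zero (measurable_pi_apply i)
      (measurable_pi_apply j))

theorem pi_argmaxSet [IsProbabilityMeasure μ] [NullSingletonClass μ] (i : ι) :
    Measure.pi (fun _ : ι => μ) (argmaxSet i) = (Fintype.card ι : ℝ≥0∞)⁻¹ := by
  classical
  have : Nonempty ι := ⟨i⟩
  have hsum := measure_iUnion₀ (pairwise_aedisjoint_pi_argmaxSet (ι := ι) μ)
    fun k => (measurableSet_argmaxSet k).nullMeasurableSet
  rw [iUnion_argmaxSet, measure_univ, tsum_fintype,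
    Finset.sum_congr rfl fun k _ => pi_argmaxSet_eq_pi_argmaxSet μ k i, Finset.sum_const,
    Finset.card_univ, nsmul_eq_mul] at hsum
  exact ENNReal.eq_inv_of_mul_eq_one_left (by rw [mul_comm, hsum])

end argmaxSet

theorem le_argmaxIdx {m : ℕ} (x : Fin (m + 1) → ℝ) (j : Fin (m + 1)) :
    x j ≤ x (argmaxIdx x) :=
  Classical.choose_spec (Finite.exists_max x) j

/-- the inspection-paradox counterexample: for i.i.d. continuous
`Y_1, …, Y_{n+1}`, swapping the argmax position with position 1 changes the joint
distribution; in the swapped sequence the first coordinate is a.s. the maximum,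
while for the original sequence the first coordinate is the maximum with
probability `1/(n+1)`. -/
theorem inspection_paradox
    {Ω : Type*} [MeasurableSpace Ω] (P : Measure Ω) [IsProbabilityMeasure P]
    (n : ℕ) (hn : 1 ≤ n) (Y : Fin (n + 1) → Ω → ℝ)
    (hmeas : ∀ i, Measurable (Y i))
    (hindep : iIndepFun Y P)
    (hident : ∀ i j, P.map (Y i) = P.map (Y j))
    (hcont : ∀ (i : Fin (n + 1)) (x : ℝ), P.map (Y i) {x} = 0) :
    P.map (fun ω => fun j =>
        Y (Equiv.swap (argmaxIdx fun i => Y i ω) 0 j) ω) ≠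
      P.map (fun ω => fun j => Y j ω) ∧
    P {ω | ∀ j, Y j ω ≤
        Y (Equiv.swap (argmaxIdx fun i => Y i ω) 0 0) ω} = 1 ∧
    P {ω | ∀ j, Y j ω ≤ Y 0 ω} = ENNReal.ofReal (1 / (n + 1)) := by
  set μ := P.map (Y 0)
  have : IsProbabilityMeasure μ := Measure.isProbabilityMeasure_map (hmeas 0).aemeasurable
  have : NullSingletonClass μ := ⟨hcont 0⟩
  have hYmeas : Measurable fun ω j => Y j ω := measurable_pi_lambda _ hmeas
  have hjoint : P.map (fun ω j => Y j ω) = Measure.pi fun _ => μ := by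
    rw [hindep.map_fun_eq_pi_map fun i => (hmeas i).aemeasurable]
    simp_rw [hident _ 0, μ]
  have hmax : Measure.pi (fun _ : Fin (n + 1) => μ) (argmaxSet 0) = (n + 1 : ℝ≥0∞)⁻¹ := by
    rw [pi_argmaxSet, Fintype.card_fin, Nat.cast_succ]
  have hle : ∀ ω j, Y j ω ≤ Y (argmaxIdx fun i => Y i ω) ω := fun ω => le_argmaxIdx _
  refine ⟨?_, by simp [hle], ?_⟩
  · rw [hjoint]
    refine Measure.map_ne_of_forall_mem (measurableSet_argmaxSet 0) (fun ω j => by simp [hle]) ?_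
    rw [hmax, Ne, ENNReal.inv_eq_one]
    norm_cast
    omega
  · change P ((fun ω j => Y j ω) ⁻¹' argmaxSet 0) = _
    rw [← Measure.map_apply hYmeas (measurableSet_argmaxSet 0), hjoint, hmax, one_div,
      ENNReal.ofReal_inv_of_pos (by positivity)]
    norm_cast
end
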